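/- Fix 0 ≤ θ ≤ 1, a nonnegative real random variable X, d×d density matrices ρ_1,…,ρ_n, and d×d orthogonal projections Π_1,…,Π_n. Let p_i = Tr(ρ_i Π_i), let T ~ PB(p_1,…,p_n) be the associated Poisson binomial random variable, independent of X, and assume Pr(T + X ≤ θn) > 0. Then there exists an operator B on (ℂ^d)^{⊗n} with 0 ≤ B ≤ I such that, with ϱ = ρ_1 ⊗ … ⊗ ρ_n: (i) Tr(ϱB) = Pr(T + X > θn), and (ii) the fidelity between ϱ and the post-measurement state ϱ|_{√(I−B)} = √(I−B) ϱ √(I−B) / Tr(ϱ(I−B)) equals the Bhattacharyya coefficient BC((T | T + X ≤ θn), T) between the conditional law of T given T + X ≤ θn and the law of T. -/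

import Mathlib

/-!
Testing each factor with `Πᵢ` splits the space into `2ⁿ` orthogonal product projections `Q_S`
(exactly the factors in `S` pass), and under `ϱ = ρ₁ ⊗ ⋯ ⊗ ρₙ` the number `|S|` of passes has
law `PB(p)`. Let `B` be the function `c(t) = Pr(X > θn - t)` of this count, so that
`Tr(ϱB) = 𝔼 c(T)` and `I - B` is the function `a = 1 - c` of the count. For any `E ≥ 0`,
`√ϱ √E ϱ √E √ϱ = (√ϱ √E √ϱ)²`, hence `F(ϱ, ϱ|_{√E}) = Tr(ϱ√E) / √Tr(ϱE)`; for `E = I - B` this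
is `𝔼 √a(T) / √Pr(T + X ≤ θn)`, the Bhattacharyya coefficient.
-/

open scoped BigOperators ComplexOrder Matrix Classical
open Matrix

section MatrixDefs

variable {m : Type*} [Fintype m] [DecidableEq m]

/-- Square root of a positive semidefinite matrix (junk value `0` otherwise). -/
noncomputable def matSqrt (A : Matrix m m ℂ) : Matrix m m ℂ :=
  if h : A.PosSemidef then
    (h.1.eigenvectorUnitary : Matrix m m ℂ) *
      diagonal ((↑) ∘ Real.sqrt ∘ h.1.eigenvalues) *
      (star h.1.eigenvectorUnitary : Matrix m m ℂ)
  else 0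

/-- A density matrix: positive semidefinite with unit trace. -/
def IsDensityMatrix (ρ : Matrix m m ℂ) : Prop :=
  ρ.PosSemidef ∧ ρ.trace = 1

/-- An orthogonal projection: Hermitian and idempotent. -/
def IsProjectionMatrix (P : Matrix m m ℂ) : Prop :=
  P.IsHermitian ∧ P * P = P

/-- Fidelity `F(ρ,σ) = Tr √(√ρ σ √ρ)`. -/
noncomputable def fidelity (ρ σ : Matrix m m ℂ) : ℝ :=
  (matSqrt (matSqrt ρ * σ * matSqrt ρ)).trace.re

/-- Post-measurement state `ϱ|_{√E} = √E ϱ √E / Tr(ϱ E)`. -/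
noncomputable def postState (ϱ E : Matrix m m ℂ) : Matrix m m ℂ :=
  (Matrix.trace (matSqrt E * ϱ * matSqrt E))⁻¹ • (matSqrt E * ϱ * matSqrt E)

end MatrixDefs

/-- Probability mass function of the Poisson binomial distribution `PB(p₁,…,pₙ)`. -/
noncomputable def pbPMF (n : ℕ) (p : Fin n → ℝ) (t : ℕ) : ℝ :=
  ∑ s ∈ Finset.powersetCard t (Finset.univ : Finset (Fin n)),
    (∏ i ∈ s, p i) * ∏ i ∈ sᶜ, (1 - p i)

/-- `n`-fold tensor product `ρ₁ ⊗ ⋯ ⊗ ρₙ` of `d × d` matrices,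
realized on the index set `Fin n → Fin d`. -/
noncomputable def tensorState {n d : ℕ} (ρ : Fin n → Matrix (Fin d) (Fin d) ℂ) :
    Matrix (Fin n → Fin d) (Fin n → Fin d) ℂ :=
  Matrix.of fun f g => ∏ i, ρ i (f i) (g i)

/-- `Pr(T + X > θ·n)` where `T ~ PB(p)` and `X` is an independent random variable
with law `μ`. -/
noncomputable def prExceedLaw (n : ℕ) (p : Fin n → ℝ) (μ : MeasureTheory.Measure ℝ)
    (θ : ℝ) : ℝ :=
  ∑ t ∈ Finset.range (n + 1), pbPMF n p t * (μ (Set.Ioi (θ * n - t))).toReal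

/-- `Pr(T + X ≤ θ·n)` where `T ~ PB(p)` and `X` is an independent random variable
with law `μ`. -/
noncomputable def prAtMostLaw (n : ℕ) (p : Fin n → ℝ) (μ : MeasureTheory.Measure ℝ)
    (θ : ℝ) : ℝ :=
  ∑ t ∈ Finset.range (n + 1), pbPMF n p t * (μ (Set.Iic (θ * n - t))).toReal

/-- The Bhattacharyya coefficient `BC((T | T + X ≤ θn), T)` between the conditional
law of `T ~ PB(p)` given `T + X ≤ θn` and the law of `T`. -/
noncomputable def bcCond (n : ℕ) (p : Fin n → ℝ) (μ : MeasureTheory.Measure ℝ)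
    (θ : ℝ) : ℝ :=
  ∑ t ∈ Finset.range (n + 1),
    Real.sqrt ((pbPMF n p t * (μ (Set.Iic (θ * n - t))).toReal / prAtMostLaw n p μ θ) *
      pbPMF n p t)

lemma Complex.ofReal_re_eq_of_nonneg {z : ℂ} (hz : 0 ≤ z) : (z.re : ℂ) = z :=
  Complex.ext rfl (by simp [(Complex.nonneg_iff.mp hz).2])

section Sqrt

variable {m : Type*} [Fintype m] [DecidableEq m]

open scoped MatrixOrder in
lemma matSqrt_eq_cfcSqrt {A : Matrix m m ℂ} (hA : A.PosSemidef) : matSqrt A = CFC.sqrt A := by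
  rw [matSqrt, dif_pos hA, CFC.sqrt_eq_cfc, cfc_nnreal_eq_real _ A, hA.1.cfc_eq]
  simp only [IsHermitian.cfc, Unitary.conjStarAlgAut_apply]
  congr 3
  funext i
  simp [Real.coe_sqrt, Real.coe_toNNReal', max_eq_left (hA.eigenvalues_nonneg i)]

open scoped MatrixOrder in
lemma Matrix.PosSemidef.matSqrt {A : Matrix m m ℂ} (hA : A.PosSemidef) :
    (matSqrt A).PosSemidef := by
  rw [matSqrt_eq_cfcSqrt hA]
  exact (CFC.sqrt_nonneg A).posSemidef

open scoped MatrixOrder in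
lemma matSqrt_sq {A : Matrix m m ℂ} (hA : A.PosSemidef) : matSqrt A ^ 2 = A := by
  rw [matSqrt_eq_cfcSqrt hA]
  exact CFC.sq_sqrt A hA.nonneg

open scoped MatrixOrder in
lemma matSqrt_eq_of_sq_eq {A C : Matrix m m ℂ} (hC : C.PosSemidef) (h : C ^ 2 = A) :
    matSqrt A = C := by
  rw [matSqrt_eq_cfcSqrt (h ▸ hC.pow 2)]
  exact CFC.sqrt_unique (by rw [← sq, h]) hC.nonneg

theorem fidelity_postState {ϱ E : Matrix m m ℂ} (hϱ : ϱ.PosSemidef) (hE : E.PosSemidef) :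
    fidelity ϱ (postState ϱ E) = (ϱ * matSqrt E).trace.re / √(ϱ * E).trace.re := by
  have hRpsd := hϱ.matSqrt
  have hCpsd := hE.matSqrt
  have hR : matSqrt ϱ * matSqrt ϱ = ϱ := by rw [← sq, matSqrt_sq hϱ]
  have hC : matSqrt E * matSqrt E = E := by rw [← sq, matSqrt_sq hE]
  unfold fidelity postState
  generalize matSqrt ϱ = R at hRpsd hR ⊢
  generalize matSqrt E = C at hCpsd hC ⊢
  subst hR hC
  have hM : (R * C * R).PosSemidef := by
    simpa only [hRpsd.1.eq] using hCpsd.conjTranspose_mul_mul_same R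
  have hCϱC : (C * (R * R) * C).PosSemidef := by
    simpa only [hCpsd.1.eq] using hϱ.conjTranspose_mul_mul_same C
  have hz : (C * (R * R) * C).trace = ((R * R * (C * C)).trace.re : ℂ) := by
    rw [← Complex.ofReal_re_eq_of_nonneg hCϱC.trace_nonneg]
    simp only [Matrix.mul_assoc, Matrix.trace_mul_comm C]
  set z := (R * R * (C * C)).trace.re
  have hz0 : 0 ≤ z := by simpa [hz] using (Complex.nonneg_iff.mp hCϱC.trace_nonneg).1
  have hsquare :
      R * ((z : ℂ)⁻¹ • (C * (R * R) * C)) * R = ((z⁻¹ : ℝ) : ℂ) • (R * C * R) ^ 2 := by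
    simp only [sq, Matrix.mul_smul, Matrix.smul_mul, Complex.ofReal_inv, Matrix.mul_assoc]
  have hsqrt : matSqrt (((z⁻¹ : ℝ) : ℂ) • (R * C * R) ^ 2) = ((√z⁻¹ : ℝ) : ℂ) • (R * C * R) :=
    matSqrt_eq_of_sq_eq (hM.smul (Complex.zero_le_real.mpr (Real.sqrt_nonneg _)))
      (by rw [smul_pow, ← Complex.ofReal_pow, Real.sq_sqrt (inv_nonneg.mpr hz0)])
  rw [hz, hsquare, hsqrt, Matrix.trace_smul, smul_eq_mul, Complex.re_ofReal_mul,
    Matrix.trace_mul_cycle, Real.sqrt_inv, div_eq_inv_mul]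

end Sqrt

section Projection

variable {m : Type*} [Fintype m] {Q : Matrix m m ℂ}

lemma IsProjectionMatrix.one_sub [DecidableEq m] (hQ : IsProjectionMatrix Q) :
    IsProjectionMatrix (1 - Q) :=
  ⟨isHermitian_one.sub hQ.1, by rw [sub_mul, one_mul, mul_sub, mul_one, hQ.2, sub_self, sub_zero]⟩

lemma IsProjectionMatrix.trace_mul_nonneg (hQ : IsProjectionMatrix Q) {ρ : Matrix m m ℂ}
    (hρ : ρ.PosSemidef) : 0 ≤ (ρ * Q).trace := by
  have hρQ : (ρ * Q).trace = (Qᴴ * ρ * Q).trace := by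
    rw [hQ.1.eq, Matrix.trace_mul_cycle, hQ.2, Matrix.trace_mul_comm]
  exact hρQ ▸ (hρ.conjTranspose_mul_mul_same Q).trace_nonneg

lemma IsDensityMatrix.trace_mul_one_sub [DecidableEq m] {ρ : Matrix m m ℂ}
    (hρ : IsDensityMatrix ρ) :
    (ρ * (1 - Q)).trace = 1 - (ρ * Q).trace := by
  rw [mul_sub, mul_one, Matrix.trace_sub, hρ.2]

lemma IsDensityMatrix.trace_mul_proj_re_mem_Icc [DecidableEq m] {ρ : Matrix m m ℂ}
    (hρ : IsDensityMatrix ρ) (hQ : IsProjectionMatrix Q) : (ρ * Q).trace.re ∈ Set.Icc 0 1 := by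
  have h := Complex.nonneg_iff.mp (hQ.one_sub.trace_mul_nonneg hρ.1)
  rw [hρ.trace_mul_one_sub, Complex.sub_re, Complex.one_re, sub_nonneg] at h
  exact ⟨(Complex.nonneg_iff.mp (hQ.trace_mul_nonneg hρ.1)).1, h.1⟩

end Projection

section Tensor

variable {n d : ℕ}

lemma tensorState_mul (ρ σ : Fin n → Matrix (Fin d) (Fin d) ℂ) :
    tensorState ρ * tensorState σ = tensorState fun i => ρ i * σ i := by
  ext f g
  simp only [tensorState, Matrix.mul_apply, Matrix.of_apply, Fintype.prod_sum,
    Finset.prod_mul_distrib]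

lemma trace_tensorState (ρ : Fin n → Matrix (Fin d) (Fin d) ℂ) :
    (tensorState ρ).trace = ∏ i, (ρ i).trace := by
  simp only [Matrix.trace, Matrix.diag, tensorState, Matrix.of_apply, Fintype.prod_sum]

lemma conjTranspose_tensorState (ρ : Fin n → Matrix (Fin d) (Fin d) ℂ) :
    (tensorState ρ)ᴴ = tensorState fun i => (ρ i)ᴴ := by
  ext f g
  simp [tensorState, Matrix.conjTranspose_apply, star_prod]

lemma tensorState_one : tensorState (fun _ : Fin n => (1 : Matrix (Fin d) (Fin d) ℂ)) = 1 := by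
  ext f g
  simp only [tensorState, Matrix.of_apply, Matrix.one_apply, Finset.prod_boole]
  simp [funext_iff]

lemma tensorState_eq_zero {ρ : Fin n → Matrix (Fin d) (Fin d) ℂ} (j : Fin n) (h : ρ j = 0) :
    tensorState ρ = 0 := by
  ext f g
  exact Finset.prod_eq_zero (Finset.mem_univ j) (by simp [h])

lemma tensorState_posSemidef {ρ : Fin n → Matrix (Fin d) (Fin d) ℂ}
    (h : ∀ i, (ρ i).PosSemidef) : (tensorState ρ).PosSemidef := by
  have hρ : ρ = fun i => (matSqrt (ρ i))ᴴ * matSqrt (ρ i) := funext fun i => by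
    rw [(h i).matSqrt.1.eq, ← sq, matSqrt_sq (h i)]
  rw [hρ, ← tensorState_mul, ← conjTranspose_tensorState]
  exact posSemidef_conjTranspose_mul_self _

end Tensor

lemma Fintype.prod_ite_mem_eq_prod_mul_prod_compl {ι M : Type*} [Fintype ι] [DecidableEq ι]
    [CommMonoid M] (S : Finset ι) (f g : ι → M) :
    ∏ i, (if i ∈ S then f i else g i) = (∏ i ∈ S, f i) * ∏ i ∈ Sᶜ, g i := by
  simpa [Finset.piecewise, Finset.compl_eq_univ_sdiff] using
    Finset.prod_piecewise Finset.univ S f g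

section Outcome

variable {n d : ℕ}

lemma tensorState_add (A B : Fin n → Matrix (Fin d) (Fin d) ℂ) :
    tensorState (fun i => A i + B i) =
      ∑ S : Finset (Fin n), tensorState fun i => if i ∈ S then A i else B i := by
  ext f g
  simp only [tensorState, Matrix.of_apply, Matrix.sum_apply, Matrix.add_apply, Fintype.prod_add]
  refine Finset.sum_congr rfl fun S _ => ?_
  rw [← Fintype.prod_ite_mem_eq_prod_mul_prod_compl]
  exact Finset.prod_congr rfl fun i _ =>
    (apply_ite (fun M : Matrix (Fin d) (Fin d) ℂ => M (f i) (g i)) _ _ _).symm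

noncomputable def outcomeProj (P : Fin n → Matrix (Fin d) (Fin d) ℂ) (S : Finset (Fin n)) :
    Matrix (Fin n → Fin d) (Fin n → Fin d) ℂ :=
  tensorState fun i => if i ∈ S then P i else 1 - P i

variable {P : Fin n → Matrix (Fin d) (Fin d) ℂ}

lemma sum_outcomeProj : ∑ S : Finset (Fin n), outcomeProj P S = 1 := by
  rw [← tensorState_one, ← funext fun i => add_sub_cancel (P i) 1, tensorState_add]
  rfl

lemma outcomeProj_mul_outcomeProj (hP : ∀ i, IsProjectionMatrix (P i)) (S T : Finset (Fin n)) :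
    outcomeProj P S * outcomeProj P T = if S = T then outcomeProj P S else 0 := by
  rw [outcomeProj, outcomeProj, tensorState_mul]
  split_ifs with hST
  · subst hST
    congr 1
    funext i
    split_ifs
    exacts [(hP i).2, (hP i).one_sub.2]
  · obtain ⟨j, hj⟩ : ∃ j, ¬(j ∈ S ↔ j ∈ T) := by simpa [Finset.ext_iff] using hST
    refine tensorState_eq_zero j ?_
    by_cases hjS : j ∈ S
    · simp [hjS, show j ∉ T by tauto, mul_sub, (hP j).2]
    · simp [hjS, show j ∈ T by tauto, sub_mul, (hP j).2]

lemma outcomeProj_posSemidef (hP : ∀ i, IsProjectionMatrix (P i)) (S : Finset (Fin n)) :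
    (outcomeProj P S).PosSemidef := by
  have hherm : (outcomeProj P S)ᴴ = outcomeProj P S := by
    rw [outcomeProj, conjTranspose_tensorState]
    congr 1
    funext i
    split_ifs
    exacts [(hP i).1.eq, (hP i).one_sub.1.eq]
  simpa [hherm, outcomeProj_mul_outcomeProj hP] using
    posSemidef_conjTranspose_mul_self (outcomeProj P S)

lemma trace_tensorState_mul_outcomeProj {ρ : Fin n → Matrix (Fin d) (Fin d) ℂ} {p : Fin n → ℝ}
    (hρ : ∀ i, IsDensityMatrix (ρ i)) (hP : ∀ i, IsProjectionMatrix (P i))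
    (hp : ∀ i, p i = ((ρ i * P i).trace).re) (S : Finset (Fin n)) :
    (tensorState ρ * outcomeProj P S).trace =
      (((∏ i ∈ S, p i) * ∏ i ∈ Sᶜ, (1 - p i) : ℝ) : ℂ) := by
  have hsite : ∀ i, (ρ i * if i ∈ S then P i else 1 - P i).trace
      = ((if i ∈ S then p i else 1 - p i : ℝ) : ℂ) := fun i => by
    have hpi : (p i : ℂ) = (ρ i * P i).trace :=
      hp i ▸ Complex.ofReal_re_eq_of_nonneg ((hP i).trace_mul_nonneg (hρ i).1)
    split_ifs
    · exact hpi.symm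
    · rw [(hρ i).trace_mul_one_sub, ← hpi, Complex.ofReal_sub, Complex.ofReal_one]
  rw [outcomeProj, tensorState_mul, trace_tensorState, Finset.prod_congr rfl fun i _ => hsite i,
    ← Complex.ofReal_prod, Fintype.prod_ite_mem_eq_prod_mul_prod_compl]

end Outcome

lemma sum_powerset_mul_eq_sum_pbPMF {n : ℕ} (p : Fin n → ℝ) (x : ℕ → ℝ) :
    ∑ S : Finset (Fin n), x S.card * ((∏ i ∈ S, p i) * ∏ i ∈ Sᶜ, (1 - p i)) =
      ∑ t ∈ Finset.range (n + 1), x t * pbPMF n p t := by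
  rw [← Finset.powerset_univ, Finset.sum_powerset, Finset.card_univ, Fintype.card_fin]
  refine Finset.sum_congr rfl fun t _ => ?_
  rw [pbPMF, Finset.mul_sum]
  refine Finset.sum_congr rfl fun S hS => ?_
  rw [(Finset.mem_powersetCard.mp hS).2]

lemma pbPMF_nonneg {n : ℕ} {p : Fin n → ℝ} (hp : ∀ i, p i ∈ Set.Icc 0 1) (t : ℕ) :
    0 ≤ pbPMF n p t :=
  Finset.sum_nonneg fun _ _ => mul_nonneg (Finset.prod_nonneg fun i _ => (hp i).1)
    (Finset.prod_nonneg fun i _ => sub_nonneg.mpr (hp i).2)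

section CountOp

variable {n d : ℕ} {P : Fin n → Matrix (Fin d) (Fin d) ℂ}

/-- `x(T̂)` for the count `T̂ = ∑ᵢ Πᵢ⁽ⁱ⁾` of passed tests, whose spectral projections are the
`outcomeProj P S`. -/
noncomputable def countOp (P : Fin n → Matrix (Fin d) (Fin d) ℂ) (x : ℕ → ℝ) :
    Matrix (Fin n → Fin d) (Fin n → Fin d) ℂ :=
  ∑ S : Finset (Fin n), (x S.card : ℂ) • outcomeProj P S

lemma countOp_mul_countOp (hP : ∀ i, IsProjectionMatrix (P i)) (x y : ℕ → ℝ) :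
    countOp P x * countOp P y = countOp P (x * y) := by
  simp only [countOp, Finset.sum_mul_sum, smul_mul_smul, outcomeProj_mul_outcomeProj hP,
    smul_ite, smul_zero, Finset.sum_ite_eq, Finset.mem_univ, if_true, Pi.mul_apply,
    Complex.ofReal_mul]

lemma one_sub_countOp (x : ℕ → ℝ) : 1 - countOp P x = countOp P (1 - x) := by
  simp only [countOp, ← sum_outcomeProj (P := P), ← Finset.sum_sub_distrib, Pi.sub_apply,
    Pi.one_apply, Complex.ofReal_sub, Complex.ofReal_one, sub_smul, one_smul]

lemma countOp_posSemidef (hP : ∀ i, IsProjectionMatrix (P i)) {x : ℕ → ℝ} (hx : 0 ≤ x) :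
    (countOp P x).PosSemidef :=
  posSemidef_sum _ fun S _ =>
    (outcomeProj_posSemidef hP S).smul (Complex.zero_le_real.mpr (hx S.card))

lemma matSqrt_countOp (hP : ∀ i, IsProjectionMatrix (P i)) {x : ℕ → ℝ} (hx : 0 ≤ x) :
    matSqrt (countOp P x) = countOp P fun t => √(x t) := by
  refine matSqrt_eq_of_sq_eq (countOp_posSemidef hP fun t => Real.sqrt_nonneg _) ?_
  rw [sq, countOp_mul_countOp hP]
  congr 1
  funext t
  exact Real.mul_self_sqrt (hx t)

lemma trace_tensorState_mul_countOp {ρ : Fin n → Matrix (Fin d) (Fin d) ℂ} {p : Fin n → ℝ}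
    (hρ : ∀ i, IsDensityMatrix (ρ i)) (hP : ∀ i, IsProjectionMatrix (P i))
    (hp : ∀ i, p i = ((ρ i * P i).trace).re) (x : ℕ → ℝ) :
    (tensorState ρ * countOp P x).trace =
      ((∑ t ∈ Finset.range (n + 1), x t * pbPMF n p t : ℝ) : ℂ) := by
  simp only [countOp, Finset.mul_sum, Matrix.trace_sum, Matrix.mul_smul, Matrix.trace_smul,
    trace_tensorState_mul_outcomeProj hρ hP hp, smul_eq_mul, ← Complex.ofReal_mul,
    ← Complex.ofReal_sum, sum_powerset_mul_eq_sum_pbPMF]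

end CountOp

lemma bcCond_eq {n : ℕ} {p : Fin n → ℝ} (hp : ∀ i, p i ∈ Set.Icc 0 1)
    (μ : MeasureTheory.Measure ℝ) (θ : ℝ) :
    bcCond n p μ θ = (∑ t ∈ Finset.range (n + 1),
      √(μ (Set.Iic (θ * n - t))).toReal * pbPMF n p t) / √(prAtMostLaw n p μ θ) := by
  rw [bcCond, Finset.sum_div]
  refine Finset.sum_congr rfl fun t _ => ?_
  rw [show pbPMF n p t * (μ (Set.Iic (θ * n - t))).toReal / prAtMostLaw n p μ θ * pbPMF n p t =
      pbPMF n p t * pbPMF n p t * (μ (Set.Iic (θ * n - t))).toReal / prAtMostLaw n p μ θ by ring,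
    Real.sqrt_div (mul_nonneg (mul_self_nonneg _) ENNReal.toReal_nonneg),
    Real.sqrt_mul (mul_self_nonneg _), Real.sqrt_mul_self (pbPMF_nonneg hp t), mul_comm]

theorem gentle_quantum_measurement_product_states_general
    (d n : ℕ) (ρ P : Fin n → Matrix (Fin d) (Fin d) ℂ) (p : Fin n → ℝ) (θ : ℝ)
    (μ : MeasureTheory.Measure ℝ) [MeasureTheory.IsProbabilityMeasure μ]
    (hρ : ∀ i, IsDensityMatrix (ρ i)) (hP : ∀ i, IsProjectionMatrix (P i))
    (hp : ∀ i, p i = ((ρ i * P i).trace).re) :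
    ∃ B : Matrix (Fin n → Fin d) (Fin n → Fin d) ℂ,
      B.PosSemidef ∧ (1 - B).PosSemidef ∧
      (tensorState ρ * B).trace = (prExceedLaw n p μ θ : ℂ) ∧
      fidelity (tensorState ρ) (postState (tensorState ρ) (1 - B)) = bcCond n p μ θ := by
  set below : ℕ → ℝ := fun t => (μ (Set.Iic (θ * n - t))).toReal
  set above : ℕ → ℝ := fun t => (μ (Set.Ioi (θ * n - t))).toReal
  have hbelow : 1 - above = below := funext fun t => by
    have h := MeasureTheory.probReal_add_probReal_compl (μ := μ) (s := Set.Iic (θ * n - t))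
      measurableSet_Iic
    rw [Set.compl_Iic] at h
    exact (eq_sub_of_add_eq h).symm
  have hp01 : ∀ i, p i ∈ Set.Icc 0 1 := fun i => hp i ▸ (hρ i).trace_mul_proj_re_mem_Icc (hP i)
  have hE : (1 - countOp P above).PosSemidef := by
    rw [one_sub_countOp, hbelow]
    exact countOp_posSemidef hP fun t => ENNReal.toReal_nonneg
  refine ⟨countOp P above, countOp_posSemidef hP fun t => ENNReal.toReal_nonneg, hE, ?_, ?_⟩
  · rw [trace_tensorState_mul_countOp hρ hP hp, prExceedLaw]
    simp only [above, mul_comm]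
  · rw [fidelity_postState (tensorState_posSemidef fun i => (hρ i).1) hE, one_sub_countOp,
      hbelow, matSqrt_countOp hP fun t => ENNReal.toReal_nonneg,
      trace_tensorState_mul_countOp hρ hP hp, trace_tensorState_mul_countOp hρ hP hp,
      Complex.ofReal_re, Complex.ofReal_re, bcCond_eq hp01, prAtMostLaw]
    simp only [below, mul_comm]

/-- **Gentle quantum measurements on non-identical product states.**
Fix `0 ≤ θ ≤ 1`, a nonnegative real random variable `X` (with law `μ`), density
matrices `ρ₁,…,ρₙ` and orthogonal projections `Π₁,…,Πₙ` on `ℂ^d`.  With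
`pᵢ = Tr(ρᵢ Πᵢ)`, `T ~ PB(p)` independent of `X` and `Pr(T + X ≤ θn) > 0`, there is an
operator `0 ≤ B ≤ I` on `(ℂ^d)^{⊗n}` such that, with `ϱ = ρ₁ ⊗ ⋯ ⊗ ρₙ`:
(i) `Tr(ϱ B) = Pr(T + X > θn)`, and
(ii) `F(ϱ, ϱ|_{√(I-B)}) = BC((T | T + X ≤ θn), T)`. -/
theorem gentle_quantum_measurement_product_states
    (d n : ℕ) (ρ P : Fin n → Matrix (Fin d) (Fin d) ℂ) (p : Fin n → ℝ) (θ : ℝ)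
    (μ : MeasureTheory.Measure ℝ) [MeasureTheory.IsProbabilityMeasure μ]
    (hμ : μ (Set.Iio 0) = 0)
    (hθ0 : 0 ≤ θ) (hθ1 : θ ≤ 1)
    (hρ : ∀ i, IsDensityMatrix (ρ i)) (hP : ∀ i, IsProjectionMatrix (P i))
    (hp : ∀ i, p i = ((ρ i * P i).trace).re)
    (hpos : 0 < prAtMostLaw n p μ θ) :
    ∃ B : Matrix (Fin n → Fin d) (Fin n → Fin d) ℂ,
      B.PosSemidef ∧ (1 - B).PosSemidef ∧
      (tensorState ρ * B).trace = (prExceedLaw n p μ θ : ℂ) ∧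
      fidelity (tensorState ρ) (postState (tensorState ρ) (1 - B)) = bcCond n p μ θ :=
  gentle_quantum_measurement_product_states_general d n ρ P p θ μ hρ hP hp
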